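/- arXiv:2201.07446 — 2 statements merged into one kernel-verified Lean document; each statement's English description precedes it below -/
import Mathlib

section
/- Let (i_n) ∈ {-1,0,1}^ℕ satisfy i_1 = ⋯ = i_{k-1} = 0 and i_k = 1 for some k ≥ 3 (equivalently 0^∞ ≺ (i_n) ≼ 001^∞ in lexicographic order). Then the function λ ↦ (1-λ)·∑_{n≥1} i_n·λ^{n-1} is strictly increasing on (0, 1/3]. -/
open scoped Pointwise

/-- `PiFun i λ = (1-λ) ∑_{n≥0} i_n λ^n`, the series Π from the paper (0-based indexing). -/
noncomputable def PiFun (i : ℕ → ℝ) (l : ℝ) : ℝ := (1 - l) * ∑' n : ℕ, i n * l ^ n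

/-- `i` is a sequence over the alphabet `{-1,0,1}`. -/
def IsCoding (i : ℕ → ℝ) : Prop := ∀ n, i n = -1 ∨ i n = 0 ∨ i n = 1

/-- Strict lexicographic order on sequences. -/
def LexLt (i j : ℕ → ℝ) : Prop := ∃ m, (∀ n, n < m → i n = j n) ∧ i m < j m

/-- Non-strict lexicographic order on sequences. -/
def LexLe (i j : ℕ → ℝ) : Prop := LexLt i j ∨ i = j

-- `rho i j = 3^{-k}` where `k` is the first (0-based) index at which the sequences differ
-- (this equals `3^{1-k}` for 1-based indexing as in the paper).
open Classical in
noncomputable def rho (i j : ℕ → ℝ) : ℝ :=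
  if i = j then 0 else (3 : ℝ) ^ (-((sInf {n : ℕ | i n ≠ j n} : ℕ) : ℤ))

/-- The middle-`(1-2λ)` Cantor set `C_λ`. -/
def Cset (l : ℝ) : Set ℝ :=
  {x | ∃ i : ℕ → ℝ, (∀ n, i n = 0 ∨ i n = 1) ∧ x = (1 - l) * ∑' n : ℕ, i n * l ^ n}

/-- `Λ(t) = {λ ∈ (0,1/3] : t ∈ C_λ - C_λ}`. -/
def Lam (t : ℝ) : Set ℝ := {l | l ∈ Set.Ioc (0 : ℝ) (1/3) ∧ t ∈ Cset l - Cset l}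

/-!
Subtracting the geometric tail `∑_{n>k} (1-λ)λ^n = λ^(k+1)` gives
`Π(i, λ) = λ^k - 2λ^(k+1) + ∑_{n>k} (1 + i_n)(1-λ)λ^n`.
The polynomial is strictly increasing on `[0, 1/3]` because `k ≥ 2` (0-based), and the series is
nondecreasing on `[0, 1/2]`: its coefficients are nonnegative and each `(1-λ)λ^n`, `n ≥ 1`, is
nondecreasing there.
-/

open Set

section Coefficients

variable {c : ℕ → ℝ} {C l : ℝ}

lemma summable_mul_pow_of_abs_le (hc : ∀ n, |c n| ≤ C) (hl0 : 0 ≤ l) (hl1 : l < 1) :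
    Summable fun n => c n * l ^ n := by
  refine Summable.of_norm_bounded ((summable_geometric_of_lt_one hl0 hl1).mul_left C) fun n => ?_
  rw [Real.norm_eq_abs, abs_mul, abs_pow, abs_of_nonneg hl0]
  exact mul_le_mul_of_nonneg_right (hc n) (pow_nonneg hl0 n)

lemma PiFun_eq_tsum : PiFun c l = ∑' n, c n * ((1 - l) * l ^ n) := by
  rw [PiFun, ← tsum_mul_left]
  exact tsum_congr fun n => by ring

lemma monotoneOn_one_sub_mul_pow {n : ℕ} (hn : n ≠ 0) :
    MonotoneOn (fun x : ℝ => (1 - x) * x ^ n) (Icc 0 (1 / 2)) := by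
  obtain ⟨m, rfl⟩ := Nat.exists_eq_succ_of_ne_zero hn
  rintro a ⟨ha0, -⟩ b ⟨-, hb⟩ hab
  have hquad : (1 - a) * a ≤ (1 - b) * b := by nlinarith
  calc (1 - a) * a ^ (m + 1) = (1 - a) * a * a ^ m := by ring
    _ ≤ (1 - b) * b * b ^ m :=
      mul_le_mul hquad (pow_le_pow_left₀ ha0 hab m) (pow_nonneg ha0 m) (by nlinarith)
    _ = (1 - b) * b ^ (m + 1) := by ring

lemma monotoneOn_PiFun (hc0 : c 0 = 0) (hc : ∀ n, c n ∈ Icc 0 C) :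
    MonotoneOn (PiFun c) (Icc 0 (1 / 2)) := by
  have hsum : ∀ x ∈ Icc (0 : ℝ) (1 / 2), Summable fun n => c n * ((1 - x) * x ^ n) :=
    fun x hx => ((summable_mul_pow_of_abs_le (fun n => (abs_of_nonneg (hc n).1).trans_le (hc n).2)
      hx.1 (by linarith [hx.2])).mul_left (1 - x)).congr fun n => by ring
  intro a ha b hb hab
  rw [PiFun_eq_tsum, PiFun_eq_tsum]
  refine Summable.tsum_le_tsum (fun n => ?_) (hsum a ha) (hsum b hb)
  rcases n with _ | n
  · simp [hc0]
  · exact mul_le_mul_of_nonneg_left (monotoneOn_one_sub_mul_pow n.succ_ne_zero ha hb hab) (hc _).1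

end Coefficients

lemma hasSum_ite_lt_pow (k : ℕ) {l : ℝ} (hl0 : 0 ≤ l) (hl1 : l < 1) :
    HasSum (fun n => if k < n then l ^ n else 0) (l ^ (k + 1) * (1 - l)⁻¹) := by
  rw [← hasSum_nat_add_iff' (k + 1)]
  have hhead : ∑ n ∈ Finset.range (k + 1), (if k < n then l ^ n else 0) = 0 :=
    Finset.sum_eq_zero fun n hn => if_neg (by simpa [Nat.lt_succ_iff] using hn)
  rw [hhead, sub_zero]
  refine ((hasSum_geometric_of_lt_one hl0 hl1).mul_left (l ^ (k + 1))).congr_fun fun n => ?_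
  rw [if_pos (by omega), pow_add, mul_comm]

def liftTail (k : ℕ) (i : ℕ → ℝ) (n : ℕ) : ℝ := if k < n then i n + 1 else 0

lemma liftTail_mem_Icc {i : ℕ → ℝ} (hi : IsCoding i) (k n : ℕ) :
    liftTail k i n ∈ Icc (0 : ℝ) 2 := by
  unfold liftTail
  split_ifs
  · rcases hi n with h | h | h <;> norm_num [h]
  · norm_num

/-- Here `i = δ_k - 𝟙_{(k,∞)} + liftTail k i` termwise. -/
lemma PiFun_eq_of_leading_one {i : ℕ → ℝ} (hi : IsCoding i) {k : ℕ}
    (h0 : ∀ n, n < k → i n = 0) (h1 : i k = 1) {l : ℝ} (hl0 : 0 ≤ l) (hl1 : l < 1) :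
    PiFun i l = l ^ k - 2 * l ^ (k + 1) + PiFun (liftTail k i) l := by
  have hbound : ∀ n, |liftTail k i n| ≤ 2 := fun n =>
    abs_le.mpr ⟨by linarith [(liftTail_mem_Icc hi k n).1], (liftTail_mem_Icc hi k n).2⟩
  have hsum : HasSum (fun n => i n * l ^ n)
      (l ^ k - l ^ (k + 1) * (1 - l)⁻¹ + ∑' n, liftTail k i n * l ^ n) := by
    refine (((hasSum_ite_eq k (l ^ k)).sub (hasSum_ite_lt_pow k hl0 hl1)).add
      (summable_mul_pow_of_abs_le hbound hl0 hl1).hasSum).congr_fun fun n => ?_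
    rcases lt_trichotomy n k with hn | rfl | hn
    · simp [liftTail, h0 n hn, hn.ne, hn.not_gt]
    · simp [liftTail, h1]
    · simp [liftTail, hn, hn.ne']
      ring
  rw [PiFun, hsum.tsum_eq, PiFun]
  field_simp [(by linarith : (1 - l) ≠ 0)]
  ring

/-- The derivative `x^(k-1) (k - 2(k+1)x)` is positive on `(0, 1/3)` exactly when `k ≥ 2`. -/
lemma strictMonoOn_pow_sub_two_mul_pow_succ {k : ℕ} (hk : 2 ≤ k) :
    StrictMonoOn (fun x : ℝ => x ^ k - 2 * x ^ (k + 1)) (Icc 0 (1 / 3)) := by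
  apply strictMonoOn_of_deriv_pos (convex_Icc _ _) (by fun_prop)
  intro x hx
  rw [interior_Icc] at hx
  obtain ⟨hx0, hx3⟩ := hx
  obtain ⟨j, rfl⟩ : ∃ j, k = j + 1 := ⟨k - 1, by omega⟩
  have hd : HasDerivAt (fun x : ℝ => x ^ (j + 1) - 2 * x ^ (j + 1 + 1))
      (x ^ j * ((j + 1) - 2 * (j + 2) * x)) x := by
    refine ((hasDerivAt_pow (j + 1) x).sub
      ((hasDerivAt_pow (j + 1 + 1) x).const_mul 2)).congr_deriv ?_
    simp only [Nat.add_sub_cancel]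
    push_cast
    ring
  rw [hd.deriv]
  have hj : (1 : ℝ) ≤ j := by exact_mod_cast (by omega : 1 ≤ j)
  exact mul_pos (pow_pos hx0 j) (by nlinarith)

theorem stmt5 (i : ℕ → ℝ) (hi : IsCoding i) (k : ℕ) (hk : 2 ≤ k)
    (h0 : ∀ n, n < k → i n = 0) (h1 : i k = 1) :
    StrictMonoOn (fun l => PiFun i l) (Set.Ioc (0 : ℝ) (1/3)) := by
  have hpoly := (strictMonoOn_pow_sub_two_mul_pow_succ hk).mono Ioc_subset_Icc_self
  have htail : MonotoneOn (PiFun (liftTail k i)) (Ioc 0 (1 / 3)) :=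
    (monotoneOn_PiFun (by simp [liftTail]) (liftTail_mem_Icc hi k)).mono
      fun x hx => ⟨hx.1.le, by linarith [hx.2]⟩
  have hdecomp : ∀ x ∈ Ioc (0 : ℝ) (1 / 3),
      PiFun i x = x ^ k - 2 * x ^ (k + 1) + PiFun (liftTail k i) x :=
    fun x hx => PiFun_eq_of_leading_one hi h0 h1 hx.1.le (by linarith [hx.2])
  intro a ha b hb hab
  simp only [hdecomp a ha, hdecomp b hb]
  exact hpoly.add_monotone htail ha hb hab
end

section
/- Let (i_n) ∈ {-1,0,1}^ℕ satisfy 01(-1)^∞ ≼ (i_n) ≺ 01(-1)0^∞ (so that i_1 i_2 i_3 = 01(-1) and (i_4, i_5, …) ≺ 0^∞). Then the function f(λ) = (1-λ)·∑_{n≥1} i_n·λ^{n-1} is strictly concave on (0, 1/3], strictly increasing on (0, 1/4], and there exists a unique λ* ∈ [1/4, 1/3) such that f is strictly increasing on (0, λ*] and strictly decreasing on [λ*, 1/3]. -/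
/-!
Write `Π(i)(λ) = ∑ iₙ (λⁿ - λⁿ⁺¹)`. If `i` begins with `0 1 (-1) 0ᵐ (-1)`, replacing the rest of
`i` by a constant `c` turns `Π(i)` into the polynomial `envelope m c`, with error
`∑_{n ≥ m+4} (iₙ - c)(λⁿ - λⁿ⁺¹)`. For `n ≥ 4` each `λⁿ - λⁿ⁺¹` is increasing on `[0, 1/2]` and
convex on `[0, 1/3]`, so for `c = 1` the error is concave and decreasing there, and for `c = -1`
it is increasing. Hence `Π(i)` is strictly concave on `(0, 1/3]` because `envelope m 1` is,
strictly increasing on `(0, 1/4]` because `envelope m (-1)` is, and smaller at `1/3` than just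
to its left because `envelope m 1` has derivative `-(m + 1) / 3^(m+3)` at `1/3`. The peak `λ*` is
the maximiser of `Π(i)` on `[1/4, 1/3]`; strict concavity makes `Π(i)` strictly monotone on
either side of it.
-/

open scoped Pointwise

open Set Filter Topology

theorem IsCoding.abs_le_one {i : ℕ → ℝ} (hi : IsCoding i) (n : ℕ) : |i n| ≤ 1 := by
  rcases hi n with h | h | h <;> simp [h]

section Generic

variable {ι : Type*}

theorem monotoneOn_tsum {α : Type*} [Preorder α] {f : ι → α → ℝ} {s : Set α}
    (hf : ∀ n, MonotoneOn (f n) s) (hs : ∀ x ∈ s, Summable fun n => f n x) :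
    MonotoneOn (fun x => ∑' n, f n x) s :=
  fun _ hx _ hy hxy => Summable.tsum_le_tsum (fun n => hf n hx hy hxy) (hs _ hx) (hs _ hy)

theorem convexOn_tsum [Nonempty ι] {E : Type*} [AddCommMonoid E] [Module ℝ E] {f : ι → E → ℝ}
    {s : Set E} (hf : ∀ n, ConvexOn ℝ s (f n)) (hs : ∀ x ∈ s, Summable fun n => f n x) :
    ConvexOn ℝ s (fun x => ∑' n, f n x) := by
  have hconv : Convex ℝ s := (hf (Classical.arbitrary ι)).1
  refine ⟨hconv, fun x hx y hy a b ha hb hab => ?_⟩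
  have hx' := (hs x hx).mul_left a
  have hy' := (hs y hy).mul_left b
  calc ∑' n, f n (a • x + b • y) ≤ ∑' n, (a * f n x + b * f n y) :=
        Summable.tsum_le_tsum (fun n => (hf n).2 hx hy ha hb hab)
          (hs _ (hconv hx hy ha hb hab)) (hx'.add hy')
    _ = a • ∑' n, f n x + b • ∑' n, f n y := by
        rw [hx'.tsum_add hy', tsum_mul_left, tsum_mul_left, smul_eq_mul, smul_eq_mul]

theorem exists_lt_of_hasDerivAt_neg {f : ℝ → ℝ} {f' a c : ℝ} (hf : HasDerivAt f f' c)
    (hf' : f' < 0) (hac : a < c) : ∃ x ∈ Ioo a c, f c < f x := by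
  have hslope : Tendsto (slope f c) (𝓝[<] c) (𝓝 f') :=
    (hasDerivAt_iff_tendsto_slope.1 hf).mono_left (nhdsLT_le_nhdsNE c)
  obtain ⟨x, hneg, hx⟩ := ((hslope.eventually (gt_mem_nhds hf')).and (Ioo_mem_nhdsLT hac)).exists
  refine ⟨x, hx, not_le.1 fun hle => ?_⟩
  rw [slope_def_field] at hneg
  linarith [div_nonneg_of_nonpos (sub_nonpos.2 hle) (sub_nonpos.2 hx.2.le)]

theorem summable_mul_pow_of_abs_le_s6 {a : ℕ → ℝ} {C x : ℝ} (ha : ∀ n, |a n| ≤ C) (hx : |x| < 1) :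
    Summable fun n => a n * x ^ n :=
  ((summable_geometric_of_lt_one (abs_nonneg x) hx).mul_left C).of_norm_bounded fun n => by
    rw [Real.norm_eq_abs, abs_mul, abs_pow]
    exact mul_le_mul_of_nonneg_right (ha n) (by positivity)

end Generic

section Peak

variable {f : ℝ → ℝ} {s : Set ℝ} {p : ℝ}

theorem StrictConcaveOn.lt_of_isMaxOn (hf : StrictConcaveOn ℝ s f) (hp : p ∈ s)
    (hmax : IsMaxOn f s p) {x : ℝ} (hx : x ∈ s) (hxp : x ≠ p) : f x < f p :=
  (hmax hx).lt_of_ne fun h => hxp (hf.eq_of_isMaxOn (fun _ hy => h ▸ hmax hy) hmax hx hp)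

theorem StrictConcaveOn.strictMonoOn_of_isMaxOn (hf : StrictConcaveOn ℝ s f) (hp : p ∈ s)
    (hmax : IsMaxOn f s p) : StrictMonoOn f (s ∩ Iic p) := by
  rintro x ⟨hx, -⟩ y ⟨hy, hyp : y ≤ p⟩ hxy
  rcases hyp.eq_or_lt with rfl | hyp
  · exact hf.lt_of_isMaxOn hy hmax hx hxy.ne
  · have hxp := hxy.trans hyp
    have hseg : y ∈ openSegment ℝ x p := by rw [openSegment_eq_Ioo hxp]; exact ⟨hxy, hyp⟩
    simpa [min_eq_left (hf.lt_of_isMaxOn hp hmax hx hxp.ne).le] using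
      hf.lt_on_openSegment hx hp hxp.ne hseg

theorem StrictConcaveOn.strictAntiOn_of_isMaxOn (hf : StrictConcaveOn ℝ s f) (hp : p ∈ s)
    (hmax : IsMaxOn f s p) : StrictAntiOn f (s ∩ Ici p) := by
  rintro x ⟨hx, hpx : p ≤ x⟩ y ⟨hy, -⟩ hxy
  rcases hpx.eq_or_lt with rfl | hpx
  · exact hf.lt_of_isMaxOn hx hmax hy hxy.ne'
  · have hpy := hpx.trans hxy
    have hseg : x ∈ openSegment ℝ p y := by rw [openSegment_eq_Ioo hpy]; exact ⟨hpx, hxy⟩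
    simpa [min_eq_right (hf.lt_of_isMaxOn hp hmax hy hpy.ne').le] using
      hf.lt_on_openSegment hp hy hpy.ne hseg

theorem StrictConcaveOn.exists_strictMonoOn_strictAntiOn {l a c x : ℝ}
    (hf : StrictConcaveOn ℝ (Ioc l c) f) (hcont : ContinuousOn f (Icc a c)) (hla : l < a)
    (hmono : MonotoneOn f (Ioc l a)) (hx : x ∈ Icc a c) (hfx : f c < f x) :
    ∃ p ∈ Ico a c, StrictMonoOn f (Ioc l p) ∧ StrictAntiOn f (Icc p c) := by
  obtain ⟨p, hp, hmax⟩ := isCompact_Icc.exists_isMaxOn ⟨x, hx⟩ hcont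
  have hpc : p < c := hp.2.lt_of_ne fun h => (hmax hx).not_gt (h ▸ hfx)
  have hmax' : IsMaxOn f (Ioc l c) p := fun y hy => by
    rcases le_or_gt y a with hya | hay
    · exact (hmono ⟨hy.1, hya⟩ ⟨hla, le_rfl⟩ hya).trans (hmax ⟨le_rfl, hx.1.trans hx.2⟩)
    · exact hmax ⟨hay.le, hy.2⟩
  have hpmem : p ∈ Ioc l c := ⟨hla.trans_le hp.1, hp.2⟩
  refine ⟨p, ⟨hp.1, hpc⟩, ?_, ?_⟩
  · exact (hf.strictMonoOn_of_isMaxOn hpmem hmax').mono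
      fun y hy => ⟨⟨hy.1, hy.2.trans hp.2⟩, hy.2⟩
  · exact (hf.strictAntiOn_of_isMaxOn hpmem hmax').mono
      fun y hy => ⟨⟨(hla.trans_le hp.1).trans_le hy.1, hy.2⟩, hy.1⟩

theorem le_of_strictMonoOn_Ioc_of_strictAntiOn_Icc {l p q c : ℝ}
    (hmono : StrictMonoOn f (Ioc l p)) (hanti : StrictAntiOn f (Icc q c)) (hlq : l < q)
    (hpc : p ≤ c) : p ≤ q := by
  by_contra! hqp
  exact lt_asymm (hmono ⟨hlq, hqp.le⟩ ⟨hlq.trans hqp, le_rfl⟩ hqp)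
    (hanti ⟨le_rfl, hqp.le.trans hpc⟩ ⟨hqp.le, hpc⟩ hqp)

end Peak

def piMonomial (n : ℕ) (x : ℝ) : ℝ := x ^ n - x ^ (n + 1)

theorem PiFun_eq_tsum_s6 (i : ℕ → ℝ) (x : ℝ) : PiFun i x = ∑' n, i n * piMonomial n x := by
  rw [PiFun, ← tsum_mul_left]
  congr 1 with n
  simp only [piMonomial]
  ring

theorem hasDerivAt_piMonomial (n : ℕ) (x : ℝ) :
    HasDerivAt (piMonomial n) (n * x ^ (n - 1) - (n + 1) * x ^ n) x := by
  have h := (hasDerivAt_pow n x).sub (hasDerivAt_pow (n + 1) x)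
  rwa [Nat.add_sub_cancel, Nat.cast_succ] at h

theorem monotoneOn_piMonomial {n : ℕ} {r : ℝ} (hr : (n + 1) * r ≤ n) :
    MonotoneOn (piMonomial n) (Icc 0 r) := by
  refine monotoneOn_of_hasDerivWithinAt_nonneg (convex_Icc 0 r)
    (fun x _ => (hasDerivAt_piMonomial n x).continuousAt.continuousWithinAt)
    (fun x _ => (hasDerivAt_piMonomial n x).hasDerivWithinAt) ?_
  rw [interior_Icc]
  rintro x ⟨hx0, hxr⟩
  obtain ⟨k, rfl⟩ : ∃ k, n = k + 1 := Nat.exists_eq_add_one.2 (by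
    have : (0 : ℝ) < n := by nlinarith
    exact_mod_cast this)
  have hk : (k + 2 : ℝ) * x ≤ k + 1 := by push_cast at hr; nlinarith
  simp only [Nat.add_sub_cancel, Nat.cast_add, Nat.cast_one, pow_succ]
  nlinarith [pow_pos hx0 k]

theorem convexOn_piMonomial {n : ℕ} {r : ℝ} (hr : (n + 1) * r ≤ n - 1) :
    ConvexOn ℝ (Icc 0 r) (piMonomial n) := by
  refine convexOn_of_hasDerivWithinAt2_nonneg (convex_Icc 0 r)
    (fun x _ => (hasDerivAt_piMonomial n x).continuousAt.continuousWithinAt)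
    (fun x _ => (hasDerivAt_piMonomial n x).hasDerivWithinAt)
    (fun x _ => (((hasDerivAt_pow (n - 1) x).const_mul (n : ℝ)).sub
      ((hasDerivAt_pow n x).const_mul ((n : ℝ) + 1))).hasDerivWithinAt) ?_
  rw [interior_Icc]
  rintro x ⟨hx0, hxr⟩
  obtain ⟨k, rfl⟩ : ∃ k, n = k + 2 := Nat.exists_eq_add_of_le' (by
    have : (1 : ℝ) < n := by nlinarith
    exact_mod_cast this)
  have hk : (k + 3 : ℝ) * x ≤ k + 1 := by push_cast at hr; nlinarith
  simp only [show k + 2 - 1 = k + 1 by omega, Nat.add_sub_cancel, Nat.cast_add, Nat.cast_one,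
    Nat.cast_ofNat, pow_succ]
  nlinarith [mul_nonneg (mul_nonneg (by positivity : (0 : ℝ) ≤ k + 2) (pow_pos hx0 k).le)
    (sub_nonneg.2 hk)]

theorem summable_mul_piMonomial_add {a : ℕ → ℝ} {C x : ℝ} (ha : ∀ n, |a n| ≤ C) (hx : |x| < 1)
    (N : ℕ) : Summable fun n => a n * piMonomial (n + N) x :=
  ((summable_mul_pow_of_abs_le_s6 ha hx).mul_left (x ^ N * (1 - x))).congr fun n => by
    simp only [piMonomial]
    ring

theorem tsum_piMonomial_add {x : ℝ} (hx : |x| < 1) (N : ℕ) :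
    ∑' n, piMonomial (n + N) x = x ^ N := by
  have hx1 : 1 - x ≠ 0 := by linarith [(abs_lt.1 hx).2]
  calc ∑' n, piMonomial (n + N) x = ∑' n, x ^ N * (1 - x) * x ^ n := by
        congr 1 with n
        simp only [piMonomial]
        ring
    _ = x ^ N := by rw [tsum_mul_left, tsum_geometric_of_abs_lt_one hx, mul_assoc,
        mul_inv_cancel₀ hx1, mul_one]

theorem monotoneOn_tsum_mul_piMonomial_add {a : ℕ → ℝ} {C r : ℝ} {N : ℕ}
    (ha : ∀ n, 0 ≤ a n ∧ a n ≤ C) (hr : (N + 1) * r ≤ N) :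
    MonotoneOn (fun x => ∑' n, a n * piMonomial (n + N) x) (Icc 0 r) := by
  have hr1 : r < 1 := by nlinarith
  refine monotoneOn_tsum (fun n => (monotone_mul_left_of_nonneg (ha n).1).comp_monotoneOn
    (monotoneOn_piMonomial ?_)) fun x hx => summable_mul_piMonomial_add (C := C)
      (fun n => (abs_of_nonneg (ha n).1).trans_le (ha n).2)
      (abs_lt.2 ⟨by linarith [hx.1], by linarith [hx.2]⟩) N
  push_cast
  nlinarith [(Nat.cast_nonneg n : (0 : ℝ) ≤ n)]

theorem convexOn_tsum_mul_piMonomial_add {a : ℕ → ℝ} {C r : ℝ} {N : ℕ}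
    (ha : ∀ n, 0 ≤ a n ∧ a n ≤ C) (hr : (N + 1) * r ≤ N - 1) :
    ConvexOn ℝ (Icc 0 r) (fun x => ∑' n, a n * piMonomial (n + N) x) := by
  have hr1 : r < 1 := by nlinarith
  refine convexOn_tsum (fun n => (convexOn_piMonomial ?_).smul (ha n).1) fun x hx =>
    summable_mul_piMonomial_add (C := C)
      (fun n => (abs_of_nonneg (ha n).1).trans_le (ha n).2)
      (abs_lt.2 ⟨by linarith [hx.1], by linarith [hx.2]⟩) N
  push_cast
  nlinarith [(Nat.cast_nonneg n : (0 : ℝ) ≤ n)]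

theorem PiFun_eq_sum_add_tsum {i : ℕ → ℝ} {C x : ℝ} (hi : ∀ n, |i n| ≤ C) (hx : |x| < 1)
    (N : ℕ) (c : ℝ) :
    PiFun i x = ∑ n ∈ Finset.range N, i n * piMonomial n x + c * x ^ N +
      ∑' n, (i (n + N) - c) * piMonomial (n + N) x := by
  have hsum : Summable fun n => i n * piMonomial n x := by
    simpa using summable_mul_piMonomial_add hi hx 0
  have hconst : Summable fun n => c * piMonomial (n + N) x :=
    summable_mul_piMonomial_add (fun _ => le_refl |c|) hx N
  simp only [sub_mul]
  rw [PiFun_eq_tsum_s6, ← hsum.sum_add_tsum_nat_add N,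
    Summable.tsum_sub ((summable_nat_add_iff N).2 hsum) hconst, tsum_mul_left,
    tsum_piMonomial_add hx]
  ring

def BeginsWithPattern (i : ℕ → ℝ) (m : ℕ) : Prop :=
  i 0 = 0 ∧ i 1 = 1 ∧ i 2 = -1 ∧ (∀ j < m, i (j + 3) = 0) ∧ i (m + 3) = -1

-- `envelope m c = Π(0 1 (-1) 0ᵐ (-1) c c c …)`
def envelope (m : ℕ) (c x : ℝ) : ℝ := x - 2 * x ^ 2 + x ^ 3 - x ^ (m + 3) + (1 + c) * x ^ (m + 4)

theorem PiFun_eq_envelope_add_tsum {i : ℕ → ℝ} {m : ℕ} (hi : IsCoding i)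
    (hpat : BeginsWithPattern i m) (c : ℝ) {x : ℝ} (hx : |x| < 1) :
    PiFun i x = envelope m c x + ∑' n, (i (n + (m + 4)) - c) * piMonomial (n + (m + 4)) x := by
  obtain ⟨h0, h1, h2, hzero, hneg⟩ := hpat
  have hhead : ∑ n ∈ Finset.range (m + 4), i n * piMonomial n x =
      piMonomial 1 x - piMonomial 2 x - piMonomial (m + 3) x := by
    have hgap : ∑ j ∈ Finset.range m, i (3 + j) * piMonomial (3 + j) x = 0 :=
      Finset.sum_eq_zero fun j hj => by rw [add_comm, hzero j (Finset.mem_range.1 hj), zero_mul]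
    rw [show m + 4 = 3 + m + 1 by ring, Finset.sum_range_succ, Finset.sum_range_add, hgap,
      add_comm 3 m, hneg]
    simp [Finset.sum_range_succ, h0, h1, h2]
    ring
  rw [PiFun_eq_sum_add_tsum hi.abs_le_one hx (m + 4) c, hhead]
  simp only [envelope, piMonomial]
  ring

def envelopeDeriv (m : ℕ) (c x : ℝ) : ℝ :=
  1 - 4 * x + 3 * x ^ 2 - (m + 3) * x ^ (m + 2) + (1 + c) * (m + 4) * x ^ (m + 3)

theorem hasDerivAt_envelope (m : ℕ) (c x : ℝ) :
    HasDerivAt (envelope m c) (envelopeDeriv m c x) x := by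
  refine (((((hasDerivAt_id' x).fun_sub ((hasDerivAt_pow 2 x).const_mul 2)).fun_add
    (hasDerivAt_pow 3 x)).fun_sub (hasDerivAt_pow (m + 3) x)).fun_add
    ((hasDerivAt_pow (m + 4) x).const_mul (1 + c))).congr_deriv ?_
  simp only [envelopeDeriv, Nat.cast_add, Nat.cast_ofNat,
    show m + 3 - 1 = m + 2 by omega, show m + 4 - 1 = m + 3 by omega]
  ring

theorem hasDerivAt_envelopeDeriv (m : ℕ) (c x : ℝ) :
    HasDerivAt (envelopeDeriv m c) (-4 + 6 * x - (m + 3) * (m + 2) * x ^ (m + 1) +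
      (1 + c) * (m + 4) * (m + 3) * x ^ (m + 2)) x := by
  refine (((((hasDerivAt_const x (1 : ℝ)).fun_sub ((hasDerivAt_id' x).const_mul 4)).fun_add
    ((hasDerivAt_pow 2 x).const_mul 3)).fun_sub
    ((hasDerivAt_pow (m + 2) x).const_mul ((m : ℝ) + 3))).fun_add
    ((hasDerivAt_pow (m + 3) x).const_mul ((1 + c) * ((m : ℝ) + 4)))).congr_deriv ?_
  simp only [Nat.cast_add, Nat.cast_ofNat,
    show m + 2 - 1 = m + 1 by omega, show m + 3 - 1 = m + 2 by omega]
  ring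

theorem add_three_mul_pow_le_three (m : ℕ) {x : ℝ} (hx0 : 0 ≤ x) (hx : x ≤ 3 / 4) :
    (m + 3) * x ^ m ≤ 3 := by
  induction m with
  | zero => norm_num
  | succ k ih =>
    have hstep : ((k : ℝ) + 1 + 3) * x ≤ k + 3 := by nlinarith [(Nat.cast_nonneg k : (0 : ℝ) ≤ k)]
    calc ((↑(k + 1) : ℝ) + 3) * x ^ (k + 1) = ((k : ℝ) + 1 + 3) * x * x ^ k := by
          push_cast; ring
      _ ≤ (k + 3) * x ^ k := mul_le_mul_of_nonneg_right hstep (pow_nonneg hx0 k)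
      _ ≤ 3 := ih

theorem strictMonoOn_envelope_neg_one (m : ℕ) :
    StrictMonoOn (envelope m (-1)) (Icc 0 (1 / 4)) := by
  refine strictMonoOn_of_hasDerivWithinAt_pos (convex_Icc 0 _)
    (fun x _ => (hasDerivAt_envelope m (-1) x).continuousAt.continuousWithinAt)
    (fun x _ => (hasDerivAt_envelope m (-1) x).hasDerivWithinAt) ?_
  rw [interior_Icc]
  rintro x ⟨hx0, hx⟩
  have hpow := add_three_mul_pow_le_three m hx0.le (by linarith)
  have hx2 : (m + 3) * x ^ (m + 2) ≤ 3 * x ^ 2 := by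
    rw [pow_add, ← mul_assoc]
    exact mul_le_mul_of_nonneg_right hpow (sq_nonneg x)
  simp only [envelopeDeriv, add_neg_cancel, zero_mul, add_zero]
  nlinarith

theorem strictConcaveOn_envelope_one (m : ℕ) :
    StrictConcaveOn ℝ (Icc 0 (1 / 3)) (envelope m 1) := by
  have hderiv : deriv (envelope m 1) = envelopeDeriv m 1 :=
    funext fun x => (hasDerivAt_envelope m 1 x).deriv
  refine StrictAntiOn.strictConcaveOn_of_deriv (convex_Icc _ _)
    (fun x _ => (hasDerivAt_envelope m 1 x).continuousAt.continuousWithinAt) ?_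
  rw [hderiv, interior_Icc]
  refine strictAntiOn_of_hasDerivWithinAt_neg (convex_Ioo _ _)
    (fun x _ => (hasDerivAt_envelopeDeriv m 1 x).continuousAt.continuousWithinAt)
    (fun x _ => (hasDerivAt_envelopeDeriv m 1 x).hasDerivWithinAt) ?_
  rw [interior_Ioo]
  rintro x ⟨hx0, hx⟩
  rcases m with _ | _ | k
  · norm_num
    nlinarith
  · norm_num
    nlinarith [pow_pos hx0 2, pow_pos hx0 3]
  · have hk : 2 * ((k : ℝ) + 6) * x ≤ k + 4 := by nlinarith [(Nat.cast_nonneg k : (0 : ℝ) ≤ k)]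
    have hneg : ((k : ℝ) + 5) * x ^ (k + 3) * (2 * ((k : ℝ) + 6) * x - (k + 4)) ≤ 0 :=
      mul_nonpos_of_nonneg_of_nonpos (by positivity) (by linarith)
    push_cast
    rw [show k + 1 + 1 + 1 = k + 3 by ring, show k + 1 + 1 + 2 = k + 3 + 1 by ring,
      pow_succ x (k + 3)]
    linarith

theorem envelopeDeriv_one_third_neg (m : ℕ) : envelopeDeriv m 1 (1 / 3) < 0 := by
  have h : envelopeDeriv m 1 (1 / 3) = -((m : ℝ) + 1) * (1 / 3) ^ (m + 3) := by
    simp only [envelopeDeriv, pow_succ]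
    ring
  rw [h]
  exact mul_neg_of_neg_of_pos (by linarith [(Nat.cast_nonneg m : (0 : ℝ) ≤ m)]) (by positivity)

theorem continuousOn_PiFun {i : ℕ → ℝ} {C : ℝ} (hi : ∀ n, |i n| ≤ C) :
    ContinuousOn (PiFun i) (Ioo (-1) 1) := by
  intro x hx
  obtain ⟨r, hxr, hr⟩ := exists_between (abs_lt.2 hx)
  have hseries : ContinuousOn (fun y => ∑' n, i n * y ^ n) (Icc (-r) r) :=
    continuousOn_tsum (fun n => by fun_prop)
      ((summable_geometric_of_lt_one ((abs_nonneg x).trans hxr.le) hr).mul_left C)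
      fun n y hy => by
        rw [Real.norm_eq_abs, abs_mul, abs_pow]
        exact mul_le_mul (hi n) (pow_le_pow_left₀ (abs_nonneg y) (abs_le.2 hy) n)
          (by positivity) ((abs_nonneg _).trans (hi n))
  exact ((continuousOn_const.sub continuousOn_id).mul hseries).continuousAt
    (Icc_mem_nhds (by linarith [neg_abs_le x]) (lt_of_le_of_lt (le_abs_self x) hxr))
    |>.continuousWithinAt

theorem PiFun_eq_envelope_sub_tsum {i : ℕ → ℝ} {m : ℕ} (hi : IsCoding i)
    (hpat : BeginsWithPattern i m) {x : ℝ} (hx : |x| < 1) :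
    PiFun i x = envelope m 1 x - ∑' n, (1 - i (n + (m + 4))) * piMonomial (n + (m + 4)) x := by
  rw [PiFun_eq_envelope_add_tsum hi hpat 1 hx, sub_eq_add_neg, ← tsum_neg]
  congr 2 with n
  ring

theorem strictConcaveOn_PiFun {i : ℕ → ℝ} {m : ℕ} (hi : IsCoding i)
    (hpat : BeginsWithPattern i m) : StrictConcaveOn ℝ (Ioc 0 (1 / 3)) (PiFun i) := by
  have htail := convexOn_tsum_mul_piMonomial_add (r := 1 / 3) (N := m + 4) (C := 2)
    (a := fun n => 1 - i (n + (m + 4)))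
    (fun n => by constructor <;> linarith [abs_le.1 (hi.abs_le_one (n + (m + 4)))])
    (by push_cast; linarith)
  refine (((strictConcaveOn_envelope_one m).add_concaveOn htail.neg).subset Ioc_subset_Icc_self
    (convex_Ioc _ _)).congr fun x hx => ?_
  rw [PiFun_eq_envelope_sub_tsum hi hpat (abs_lt.2 ⟨by linarith [hx.1], by linarith [hx.2]⟩)]
  rfl

theorem strictMonoOn_PiFun {i : ℕ → ℝ} {m : ℕ} (hi : IsCoding i)
    (hpat : BeginsWithPattern i m) : StrictMonoOn (PiFun i) (Ioc 0 (1 / 4)) := by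
  have htail := monotoneOn_tsum_mul_piMonomial_add (r := 1 / 4) (N := m + 4) (C := 2)
    (a := fun n => i (n + (m + 4)) - -1)
    (fun n => by constructor <;> linarith [abs_le.1 (hi.abs_le_one (n + (m + 4)))])
    (by push_cast; linarith)
  refine (((strictMonoOn_envelope_neg_one m).add_monotone htail).mono Ioc_subset_Icc_self).congr
    fun x hx => ?_
  rw [PiFun_eq_envelope_add_tsum hi hpat (-1) (abs_lt.2 ⟨by linarith [hx.1], by linarith [hx.2]⟩)]

theorem exists_PiFun_one_third_lt {i : ℕ → ℝ} {m : ℕ} (hi : IsCoding i)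
    (hpat : BeginsWithPattern i m) :
    ∃ x ∈ Icc (1 / 4 : ℝ) (1 / 3), PiFun i (1 / 3) < PiFun i x := by
  obtain ⟨x, hx, hlt⟩ := exists_lt_of_hasDerivAt_neg (hasDerivAt_envelope m 1 (1 / 3))
    (envelopeDeriv_one_third_neg m) (show (1 / 4 : ℝ) < 1 / 3 by norm_num)
  have htail := monotoneOn_tsum_mul_piMonomial_add (r := 1 / 3) (N := m + 4) (C := 2)
    (a := fun n => 1 - i (n + (m + 4)))
    (fun n => by constructor <;> linarith [abs_le.1 (hi.abs_le_one (n + (m + 4)))])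
    (by push_cast; linarith)
  have hxle := htail ⟨by linarith [hx.1], hx.2.le⟩ ⟨by norm_num, le_rfl⟩ hx.2.le
  refine ⟨x, Ioo_subset_Icc_self hx, ?_⟩
  rw [PiFun_eq_envelope_sub_tsum hi hpat (by norm_num [abs_of_pos]),
    PiFun_eq_envelope_sub_tsum hi hpat (abs_lt.2 ⟨by linarith [hx.1], by linarith [hx.2]⟩)]
  linarith

theorem beginsWithPattern_of_lexLt {i : ℕ → ℝ} (hi : IsCoding i) (h0 : i 0 = 0) (h1 : i 1 = 1)
    (h2 : i 2 = -1) (htail : LexLt (fun n => i (n + 3)) (fun _ => 0)) :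
    ∃ m, BeginsWithPattern i m := by
  obtain ⟨m, hzero, hneg⟩ := htail
  refine ⟨m, h0, h1, h2, hzero, ?_⟩
  rcases hi (m + 3) with h | h | h
  · exact h
  all_goals norm_num [h] at hneg

theorem stmt6 (i : ℕ → ℝ) (hi : IsCoding i)
    (h0 : i 0 = 0) (h1 : i 1 = 1) (h2 : i 2 = -1)
    (htail : LexLt (fun n => i (n + 3)) (fun _ => 0)) :
    StrictConcaveOn ℝ (Set.Ioc (0 : ℝ) (1/3)) (fun l => PiFun i l) ∧
    StrictMonoOn (fun l => PiFun i l) (Set.Ioc (0 : ℝ) (1/4)) ∧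
    (∃! ls : ℝ, ls ∈ Set.Ico (1/4 : ℝ) (1/3) ∧
      StrictMonoOn (fun l => PiFun i l) (Set.Ioc (0 : ℝ) ls) ∧
      StrictAntiOn (fun l => PiFun i l) (Set.Icc ls (1/3))) := by
  obtain ⟨m, hpat⟩ := beginsWithPattern_of_lexLt hi h0 h1 h2 htail
  have hconc := strictConcaveOn_PiFun hi hpat
  have hmono := strictMonoOn_PiFun hi hpat
  obtain ⟨x, hx, hdrop⟩ := exists_PiFun_one_third_lt hi hpat
  have hcont : ContinuousOn (PiFun i) (Icc (1 / 4) (1 / 3)) :=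
    (continuousOn_PiFun hi.abs_le_one).mono (Icc_subset_Ioo (by norm_num) (by norm_num))
  obtain ⟨p, hp, hpmono, hpanti⟩ :=
    hconc.exists_strictMonoOn_strictAntiOn hcont (by norm_num) hmono.monotoneOn hx hdrop
  refine ⟨hconc, hmono, p, ⟨hp, hpmono, hpanti⟩, fun q ⟨hq, hqmono, hqanti⟩ => le_antisymm ?_ ?_⟩
  · exact le_of_strictMonoOn_Ioc_of_strictAntiOn_Icc hqmono hpanti (by linarith [hp.1]) hq.2.le
  · exact le_of_strictMonoOn_Ioc_of_strictAntiOn_Icc hpmono hqanti (by linarith [hq.1]) hp.2.le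
end
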